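/- Let Φ : ℝ⁵ → Lo¹₄ be the map Φ(t₁,t₂,t₃,t₄,t₅) = λ₁(t₁)λ₂(t₂)λ₃(t₃)λ₁(t₄)λ₂(t₅). Then Φ restricts to a homeomorphism from the open orthant O = {t ∈ ℝ⁵ : t₁ < 0, t₂ < 0, t₃ > 0, t₄ < 0, t₅ > 0} onto the set S of matrices L ∈ Lo¹₄ (with entries L₂₁ = x, L₃₁ = u, L₃₂ = y, L₄₁ = w, L₄₂ = v, L₄₃ = z) satisfying w = 0, u > 0, v > 0, xyz − xv − uz > 0, z > 0 and yz − v < 0. In particular S is nonempty and contractible. -/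

import Mathlib

open Matrix

/-- `λ_j(t) = I + t E_{j+1,j}` in `Lo¹₄` (here `j : Fin 3` is the `0`-indexed
version of `j ∈ {1,2,3}`, so the nonzero off-diagonal entry is in position
`(j+1, j)` of `Fin 4`, `0`-indexed). -/
noncomputable def lam (j : Fin 3) (t : ℝ) : Matrix (Fin 4) (Fin 4) ℝ :=
  1 + t • Matrix.single j.succ j.castSucc (1 : ℝ)

/-- The map `Φ(t₁,…,t₅) = λ₁(t₁)λ₂(t₂)λ₃(t₃)λ₁(t₄)λ₂(t₅)`. -/
noncomputable def Phi (t : Fin 5 → ℝ) : Matrix (Fin 4) (Fin 4) ℝ :=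
  lam 0 (t 0) * lam 1 (t 1) * lam 2 (t 2) * lam 0 (t 3) * lam 1 (t 4)

/-- The open orthant `O = {t ∈ ℝ⁵ : t₁ < 0, t₂ < 0, t₃ > 0, t₄ < 0, t₅ > 0}`. -/
def Orth : Set (Fin 5 → ℝ) :=
  {t | t 0 < 0 ∧ t 1 < 0 ∧ 0 < t 2 ∧ t 3 < 0 ∧ 0 < t 4}

/-- The set `S` of matrices `L ∈ Lo¹₄` (with entries `x = L₂₁, u = L₃₁,
y = L₃₂, w = L₄₁, v = L₄₂, z = L₄₃`, here `0`-indexed) satisfying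
`w = 0`, `u > 0`, `v > 0`, `xyz − xv − uz > 0`, `z > 0` and `yz − v < 0`. -/
def BLstratum : Set (Matrix (Fin 4) (Fin 4) ℝ) :=
  {L | ((∀ i, L i i = 1) ∧ ∀ i j : Fin 4, i < j → L i j = 0) ∧
    L 3 0 = 0 ∧ 0 < L 2 0 ∧ 0 < L 3 1 ∧
    0 < L 1 0 * L 2 1 * L 3 2 - L 1 0 * L 3 1 - L 2 0 * L 3 2 ∧
    0 < L 3 2 ∧ L 2 1 * L 3 2 - L 3 1 < 0}

/-! Multiplying out, `Φ(t)` has `w = 0` and `x = t₁ + t₄`, `u = t₂t₄`, `y = t₂ + t₅`, `v = t₃t₅`,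
`z = t₃`, while `xyz − xv − uz = t₁t₂t₃` and `yz − v = t₂t₃`. So the sign conditions of the orthant
and of `S` correspond, and `Φ` is inverted on `S` by the rational map
`t₃ = z`, `t₅ = v/z`, `t₂ = (yz − v)/z`, `t₄ = uz/(yz − v)`, `t₁ = x − t₄`, continuous there since
`z > 0` and `yz − v < 0`. Contractibility is transported from the convex orthant. -/

theorem Phi_eq (t : Fin 5 → ℝ) : Phi t =
    !![1, 0, 0, 0; t 0 + t 3, 1, 0, 0; t 1 * t 3, t 1 + t 4, 1, 0; 0, t 2 * t 4, t 2, 1] := by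
  ext i j
  fin_cases i <;> fin_cases j <;>
    simp [Phi, lam, Matrix.mul_apply, Fin.sum_univ_four, Matrix.single_apply, Matrix.one_apply]

noncomputable def PhiInv (L : Matrix (Fin 4) (Fin 4) ℝ) : Fin 5 → ℝ :=
  ![L 1 0 - L 2 0 * L 3 2 / (L 2 1 * L 3 2 - L 3 1),
    (L 2 1 * L 3 2 - L 3 1) / L 3 2,
    L 3 2,
    L 2 0 * L 3 2 / (L 2 1 * L 3 2 - L 3 1),
    L 3 1 / L 3 2]

theorem Phi_mapsTo : Set.MapsTo Phi Orth BLstratum := by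
  rintro t ⟨h0, h1, h2, h3, h4⟩
  rw [Phi_eq]
  refine ⟨⟨fun i => by fin_cases i <;> rfl, fun i j hij => ?_⟩, ?_⟩
  · fin_cases i <;> fin_cases j <;> first | rfl | exact absurd hij (by decide)
  have hdet : (t 0 + t 3) * (t 1 + t 4) * t 2 - (t 0 + t 3) * (t 2 * t 4) - t 1 * t 3 * t 2
      = t 0 * t 1 * t 2 := by ring
  have hyzv : (t 1 + t 4) * t 2 - t 2 * t 4 = t 1 * t 2 := by ring
  refine ⟨rfl, mul_pos_of_neg_of_neg h1 h3, mul_pos h2 h4, ?_, h2, ?_⟩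
  · show 0 < (t 0 + t 3) * (t 1 + t 4) * t 2 - (t 0 + t 3) * (t 2 * t 4) - t 1 * t 3 * t 2
    rw [hdet]
    exact mul_pos (mul_pos_of_neg_of_neg h0 h1) h2
  · show (t 1 + t 4) * t 2 - t 2 * t 4 < 0
    rw [hyzv]
    exact mul_neg_of_neg_of_pos h1 h2

theorem PhiInv_mapsTo : Set.MapsTo PhiInv BLstratum Orth := by
  rintro L ⟨-, -, hu, hv, hdet, hz, hyzv⟩
  have ht3 : L 2 0 * L 3 2 / (L 2 1 * L 3 2 - L 3 1) < 0 :=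
    div_neg_of_pos_of_neg (mul_pos hu hz) hyzv
  refine ⟨?_, div_neg_of_neg_of_pos hyzv hz, hz, ht3, div_pos hv hz⟩
  show L 1 0 - L 2 0 * L 3 2 / (L 2 1 * L 3 2 - L 3 1) < 0
  rw [sub_div' hyzv.ne]
  exact div_neg_of_pos_of_neg (by linarith) hyzv

theorem leftInvOn_PhiInv : Set.LeftInvOn PhiInv Phi Orth := by
  rintro t ⟨-, h1, h2, -, -⟩
  have hyzv : (t 1 + t 4) * t 2 - t 2 * t 4 = t 1 * t 2 := by ring
  rw [Phi_eq]
  funext i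
  fin_cases i <;> simp [PhiInv, hyzv] <;> field_simp [h1.ne, h2.ne'] <;> ring

theorem rightInvOn_PhiInv : Set.RightInvOn PhiInv Phi BLstratum := by
  rintro L ⟨⟨hdiag, hup⟩, hw, -, -, -, hz, hyzv⟩
  rw [Phi_eq]
  ext i j
  fin_cases i <;> fin_cases j <;>
    simp [PhiInv, hdiag, hw, hup] <;> field_simp [hz.ne', hyzv.ne] <;> ring

theorem continuous_Phi : Continuous Phi := by
  unfold Phi lam
  fun_prop

theorem continuousOn_PhiInv : ContinuousOn PhiInv BLstratum := by
  have hz : ∀ L ∈ BLstratum, L 3 2 ≠ 0 := fun L hL => hL.2.2.2.2.2.1.ne'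
  have hyzv : ∀ L ∈ BLstratum, L 2 1 * L 3 2 - L 3 1 ≠ 0 := fun L hL => hL.2.2.2.2.2.2.ne
  refine continuousOn_pi.2 fun i => ?_
  fin_cases i <;> simp [PhiInv] <;> fun_prop (disch := assumption)

theorem convex_Orth : Convex ℝ Orth := by
  rintro x ⟨hx0, hx1, hx2, hx3, hx4⟩ y ⟨hy0, hy1, hy2, hy3, hy4⟩ a b ha hb hab
  exact ⟨convex_Iio (0 : ℝ) hx0 hy0 ha hb hab, convex_Iio (0 : ℝ) hx1 hy1 ha hb hab,
    convex_Ioi (0 : ℝ) hx2 hy2 ha hb hab, convex_Iio (0 : ℝ) hx3 hy3 ha hb hab,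
    convex_Ioi (0 : ℝ) hx4 hy4 ha hb hab⟩

theorem nonempty_Orth : Orth.Nonempty :=
  ⟨![-1, -1, 1, -1, 1], by simp [Orth]⟩

noncomputable def PhiPartialHomeomorph :
    PartialHomeomorph (Fin 5 → ℝ) (Matrix (Fin 4) (Fin 4) ℝ) where
  toFun := Phi
  invFun := PhiInv
  source := Orth
  target := BLstratum
  map_source' := Phi_mapsTo
  map_target' := PhiInv_mapsTo
  left_inv' := leftInvOn_PhiInv
  right_inv' := rightInvOn_PhiInv
  continuousOn_toFun := continuous_Phi.continuousOn
  continuousOn_invFun := continuousOn_PhiInv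

/-- `Φ` restricts to a homeomorphism from the open orthant `O`
onto `S`; in particular `S` is nonempty and contractible. -/
theorem stmt1 :
    (∃ h : ↥Orth ≃ₜ ↥BLstratum, ∀ t : ↥Orth, (h t : Matrix (Fin 4) (Fin 4) ℝ) = Phi ↑t) ∧
      BLstratum.Nonempty ∧ ContractibleSpace ↥BLstratum := by
  let e : ↥Orth ≃ₜ ↥BLstratum := PhiPartialHomeomorph.toHomeomorphSourceTarget
  have : ContractibleSpace ↥Orth := convex_Orth.contractibleSpace nonempty_Orth
  exact ⟨⟨e, fun _ => rfl⟩, Phi_mapsTo.nonempty nonempty_Orth,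
    e.symm.contractibleSpace⟩
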